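/- arXiv:1303.5676 — 2 statements merged into one kernel-verified Lean document; each statement's English description precedes it below -/
import Mathlib

section
/- Let A, B, C be points in the Euclidean plane (EuclideanSpace ℝ (Fin 2)) such that the angle ∠ A B C at the vertex B equals 3π/5 (the interior angle of a regular pentagon). Then dist A B + dist B C ≤ 2 · dist A C. -/
open EuclideanGeometry

namespace EuclideanGeometry

variable {V P : Type*} [NormedAddCommGroup V] [InnerProductSpace ℝ V] [MetricSpace P]
  [NormedAddTorsor V P]

theorem dist_sq_add_dist_sq_le_dist_sq_of_pi_div_two_le_angle {A B C : P}
    (h : Real.pi / 2 ≤ ∠ A B C) : dist A B ^ 2 + dist B C ^ 2 ≤ dist A C ^ 2 := by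
  have hcos : Real.cos (∠ A B C) ≤ 0 :=
    Real.cos_nonpos_of_pi_div_two_le_of_le h (by linarith [angle_le_pi A B C, Real.pi_pos])
  have hlaw := law_cos A B C
  rw [dist_comm C B] at hlaw
  nlinarith [mul_nonneg (mul_nonneg (dist_nonneg (x := A) (y := B)) (dist_nonneg (x := B) (y := C)))
    (neg_nonneg.mpr hcos)]

/-- In fact `(a + b)² ≤ 2 (a² + b²) ≤ 2 c²` gives the sharper factor `√2`. -/
theorem dist_add_dist_le_two_mul_dist_of_pi_div_two_le_angle {A B C : P}
    (h : Real.pi / 2 ≤ ∠ A B C) : dist A B + dist B C ≤ 2 * dist A C := by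
  have hpyth := dist_sq_add_dist_sq_le_dist_sq_of_pi_div_two_le_angle h
  nlinarith [sq_nonneg (dist A B - dist B C), dist_nonneg (x := A) (y := B),
    dist_nonneg (x := B) (y := C), dist_nonneg (x := A) (y := C)]

end EuclideanGeometry

/-- Law-of-cosines estimate for the interior angle `3π/5` of a regular pentagon:
if the angle at `B` equals `3π/5`, then `dist A B + dist B C ≤ 2 · dist A C`. -/
theorem pentagon_angle_edge_path_bound (A B C : EuclideanSpace ℝ (Fin 2))
    (h : EuclideanGeometry.angle A B C = 3 * Real.pi / 5) :
    dist A B + dist B C ≤ 2 * dist A C :=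
  dist_add_dist_le_two_mul_dist_of_pi_div_two_le_angle (by rw [h]; linarith [Real.pi_pos])
end

section
/- Let r := 1/(2·sin(π/5)) and for k = 0,1,2,3,4 let v_k := (r·cos(2πk/5), r·sin(2πk/5)) ∈ ℝ² (with the Euclidean norm), so that v₀,…,v₄ are the vertices of a regular pentagon with side length 1. Then for every point p on the segment [v₀, v₁] and every point q on the segment [v₂, v₃], one has dist p q ≥ 1. -/
/-!
Let `u = v₁ - v₂`, a side of the pentagon, so `‖u‖ = 1`. The interior angles of the pentagon
at `v₁` and `v₂` are obtuse, so along `u` the edge `[v₀, v₁]` lies beyond `v₁` and the edge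
`[v₂, v₃]` lies behind `v₂`. Hence `⟪u, p - q⟫ ≥ ⟪u, v₁ - v₂⟫ = 1`, and projecting onto a unit
vector does not increase distances.
-/

/-- The `k`-th vertex of the regular pentagon of side length `1` centered at the origin,
inscribed in the circle of radius `r = 1/(2 sin(π/5))`. -/
noncomputable def pentagonVertex (k : Fin 5) : EuclideanSpace ℝ (Fin 2) :=
  !₂[(1 / (2 * Real.sin (Real.pi / 5))) * Real.cos (2 * Real.pi * ((k : ℕ) : ℝ) / 5),
    (1 / (2 * Real.sin (Real.pi / 5))) * Real.sin (2 * Real.pi * ((k : ℕ) : ℝ) / 5)]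

open Real RealInnerProductSpace

section InnerProductSpace

variable {E : Type*} [NormedAddCommGroup E] [InnerProductSpace ℝ E]

theorem le_dist_of_le_inner_sub {u x y : E} {c : ℝ} (hu : ‖u‖ ≤ 1) (h : c ≤ ⟪u, x - y⟫) :
    c ≤ dist x y :=
  calc c ≤ ⟪u, x - y⟫ := h
    _ ≤ ‖u‖ * ‖x - y‖ := real_inner_le_norm u (x - y)
    _ ≤ dist x y := by rw [dist_eq_norm]; exact mul_le_of_le_one_left (norm_nonneg _) hu

theorem le_inner_of_mem_segment {u a b x : E} {c : ℝ} (ha : c ≤ ⟪u, a⟫) (hb : c ≤ ⟪u, b⟫)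
    (hx : x ∈ segment ℝ a b) : c ≤ ⟪u, x⟫ :=
  (convex_halfSpace_ge (innerₛₗ ℝ u).isLinear c).segment_subset ha hb hx

theorem inner_le_of_mem_segment {u a b x : E} {c : ℝ} (ha : ⟪u, a⟫ ≤ c) (hb : ⟪u, b⟫ ≤ c)
    (hx : x ∈ segment ℝ a b) : ⟪u, x⟫ ≤ c :=
  (convex_halfSpace_le (innerₛₗ ℝ u).isLinear c).segment_subset ha hb hx

end InnerProductSpace

theorem inner_polar (r s a b : ℝ) :
    ⟪!₂[r * cos a, r * sin a], !₂[s * cos b, s * sin b]⟫ = r * s * cos (a - b) := by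
  simp [PiLp.inner_apply, Fin.sum_univ_two, cos_sub]
  ring

theorem cos_two_pi_div_five_mem_Icc : cos (2 * π / 5) ∈ Set.Icc 0 1 :=
  ⟨cos_nonneg_of_mem_Icc ⟨by linarith [pi_pos], by linarith [pi_pos]⟩, cos_le_one _⟩

theorem inner_pentagonVertex (i j : Fin 5) :
    ⟪pentagonVertex i, pentagonVertex j⟫ =
      (1 / (2 * sin (π / 5))) ^ 2 * cos (2 * π / 5 * ((i : ℕ) - (j : ℕ) : ℝ)) := by
  rw [pentagonVertex, pentagonVertex, inner_polar]
  ring_nf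

theorem norm_pentagonVertex_one_sub_two : ‖pentagonVertex 1 - pentagonVertex 2‖ = 1 := by
  have hs : sin (π / 5) ≠ 0 := (sin_pos_of_pos_of_lt_pi (by positivity) (by linarith [pi_pos])).ne'
  rw [← pow_eq_one_iff_of_nonneg (norm_nonneg _) two_ne_zero, ← real_inner_self_eq_norm_sq]
  simp only [inner_sub_left, inner_sub_right, inner_pentagonVertex]
  norm_num
  rw [show 2 * π / 5 = 2 * (π / 5) by ring, cos_two_mul, cos_sq']
  field_simp
  ring

/- `⟪u, v₀ - v₁⟫` and `⟪u, v₂ - v₃⟫` (with `u = v₁ - v₂`) both equal `r² · 2x(1 - x)`, where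
`x = cos (2π/5) ∈ [0, 1]`. -/
theorem inner_pentagonVertex_one_sub_two_le :
    ⟪pentagonVertex 1 - pentagonVertex 2, pentagonVertex 1⟫ ≤
        ⟪pentagonVertex 1 - pentagonVertex 2, pentagonVertex 0⟫ ∧
      ⟪pentagonVertex 1 - pentagonVertex 2, pentagonVertex 3⟫ ≤
        ⟪pentagonVertex 1 - pentagonVertex 2, pentagonVertex 2⟫ := by
  obtain ⟨hx₀, hx₁⟩ := cos_two_pi_div_five_mem_Icc
  have hgap := mul_nonneg hx₀ (sub_nonneg.2 hx₁)
  constructor <;>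
  · rw [← sub_nonneg, ← inner_sub_right]
    simp only [inner_sub_left, inner_sub_right, inner_pentagonVertex]
    norm_num
    rw [mul_comm _ 2, cos_two_mul]
    nlinarith [sq_nonneg (sin (π / 5))⁻¹]

/-- Any point on the edge `[v₀, v₁]` of the regular unit pentagon is at distance at
least `1` from any point on the non-adjacent edge `[v₂, v₃]`. -/
theorem pentagon_nonadjacent_edges_dist_ge_one :
    ∀ p ∈ segment ℝ (pentagonVertex 0) (pentagonVertex 1),
      ∀ q ∈ segment ℝ (pentagonVertex 2) (pentagonVertex 3),
        1 ≤ dist p q := by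
  intro p hp q hq
  set u := pentagonVertex 1 - pentagonVertex 2
  obtain ⟨h₀, h₃⟩ := inner_pentagonVertex_one_sub_two_le
  have hp' : ⟪u, pentagonVertex 1⟫ ≤ ⟪u, p⟫ := le_inner_of_mem_segment h₀ le_rfl hp
  have hq' : ⟪u, q⟫ ≤ ⟪u, pentagonVertex 2⟫ := inner_le_of_mem_segment le_rfl h₃ hq
  refine le_dist_of_le_inner_sub norm_pentagonVertex_one_sub_two.le ?_
  calc (1 : ℝ) = ⟪u, u⟫ := by
        rw [real_inner_self_eq_norm_sq, norm_pentagonVertex_one_sub_two, one_pow]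
    _ = ⟪u, pentagonVertex 1⟫ - ⟪u, pentagonVertex 2⟫ := inner_sub_right _ _ _
    _ ≤ ⟪u, p⟫ - ⟪u, q⟫ := sub_le_sub hp' hq'
    _ = ⟪u, p - q⟫ := (inner_sub_right _ _ _).symm
end
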